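/- Let r≥0, k≥1 and let β=(β_1,…,β_n) be a weak composition with n≥1 parts, and set β^-=(β_1,…,β_{n−1}). For 0≤ℓ≤k let Dom_ℓ = OP_{r;β^-,ℓ} × {subsets U⊆{0,…,ℓ−1} with |U|=β_n−k+ℓ} × {multisets B of size k−ℓ with elements in {0,…,ℓ}} and Dom'_ℓ = (OP^all_{r;β^-,ℓ}∖OP_{r;β^-,ℓ}) × {subsets U⊆{0,…,ℓ−1} with |U|=β_n−k+ℓ} × {multisets B of size k−ℓ−1 with elements in {0,…,ℓ}}. Then there exists a bijection Φ from the disjoint union over ℓ=0,…,k of Dom_ℓ ⊔ Dom'_ℓ onto OP_{r;β,k} such that inv(Φ(π,U,B)) = inv(π) + Σ_{u∈U} u + Σ_{b∈B} b for every triple (π,U,B) in the domain. -/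

import Mathlib

open scoped BigOperators

namespace omp

/-- The multiset `A(β) ∪ {0^r}`: the letter `i` (for `1 ≤ i ≤ m`) with multiplicity `β_i`,
together with `r` copies of the letter `0`. -/
def content (r : ℕ) (β : List ℕ) : Multiset ℕ :=
  Multiset.replicate r 0 +
    ∑ i ∈ Finset.range β.length, Multiset.replicate (β.getD i 0) (i + 1)

/-- `π` is an ordered multiset partition of `A(β) ∪ {0^r}` into `k` (nonempty) blocks,
with `0` allowed anywhere: the set `OP^all_{r;β,k}`. -/
def IsOPall (r : ℕ) (β : List ℕ) (k : ℕ) (π : List (Finset ℕ)) : Prop :=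
  π.length = k ∧ (∀ B ∈ π, B.Nonempty) ∧ (π.map Finset.val).sum = content r β

/-- Additionally, the last block does not contain `0`: the set `OP_{r;β,k}`. -/
def IsOP (r : ℕ) (β : List ℕ) (k : ℕ) (π : List (Finset ℕ)) : Prop :=
  IsOPall r β k π ∧ 0 ∉ π.getLastD ∅

/-- Ordered multiset partitions of `A(β) ∪ {0^r}` with shape `α`: `OP^all_{r;β,α}`. -/
def IsOPallSh (r : ℕ) (β α : List ℕ) (π : List (Finset ℕ)) : Prop :=
  (∀ B ∈ π, B.Nonempty) ∧ (π.map Finset.val).sum = content r β ∧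
    π.map Finset.card = α

/-- Shape `α` and last block avoiding `0`: `OP_{r;β,α}`. -/
def IsOPSh (r : ℕ) (β α : List ℕ) (π : List (Finset ℕ)) : Prop :=
  IsOPallSh r β α π ∧ 0 ∉ π.getLastD ∅

/-- The `i`-th block (0-indexed). -/
def blk (π : List (Finset ℕ)) (i : ℕ) : Finset ℕ := π.getD i ∅

/-- `inv`: pairs of a letter `a` in block `B_i` and the minimum `b` of a later block `B_j`
with `a > b`. -/
def inv (π : List (Finset ℕ)) : ℕ :=
  ∑ i ∈ Finset.range π.length, ∑ j ∈ Finset.range π.length,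
    if i < j then
      (@Finset.filter ℕ (fun (a : ℕ) => (blk π j).min < (a : WithBot ℕ))
        (fun a => (inferInstance : DecidableRel (· < · : WithTop ℕ → WithTop ℕ → Prop)) _ _)
        (blk π i)).card
    else 0

/-- The word `σ(π)`: each block written in decreasing order, blocks concatenated. -/
def sigmaWord (π : List (Finset ℕ)) : List ℕ :=
  (π.map (fun B => (B.sort (· ≤ ·)).reverse)).flatten

/-- The word `ind(π) = 0^{|B_1|} 1^{|B_2|} ⋯ (k-1)^{|B_k|}`. -/
def indWord (π : List (Finset ℕ)) : List ℕ :=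
  (π.zipIdx.map (fun p => List.replicate p.1.card p.2)).flatten

/-- The major index of a word (positions are 1-based). -/
def majW (w : List ℕ) : ℕ :=
  ∑ i ∈ Finset.range (w.length - 1),
    if w.getD (i + 1) 0 < w.getD i 0 then i + 1 else 0

/-- `maj(π)`: the sum of `ind(π)_{i+1}` over descents `σ_i > σ_{i+1}` of `σ(π)`. -/
def maj (π : List (Finset ℕ)) : ℕ :=
  ∑ i ∈ Finset.range ((sigmaWord π).length - 1),
    if (sigmaWord π).getD (i + 1) 0 < (sigmaWord π).getD i 0 then
      (indWord π).getD (i + 1) 0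
    else 0

/-- `dinv(π)`: primary and secondary diagonal inversions, where `B_i^h` is the `h`-th smallest
element of block `B_i` (here `h` is 0-indexed). -/
def dinv (π : List (Finset ℕ)) : ℕ :=
  ∑ i ∈ Finset.range π.length, ∑ j ∈ Finset.range π.length,
    if i < j then
      ((Finset.range (blk π i).card).filter (fun h =>
          h < (blk π j).card ∧
            ((blk π j).sort (· ≤ ·)).getD h 0 < ((blk π i).sort (· ≤ ·)).getD h 0)).card +
      ((Finset.range (blk π i).card).filter (fun h =>
          h + 1 < (blk π j).card ∧
            ((blk π j).sort (· ≤ ·)).getD (h + 1) 0 < ((blk π i).sort (· ≤ ·)).getD h 0)).card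
    else 0

/-- `miniword(π)`, built from right to left: the last block in increasing order; inductively,
if the word built so far begins with `s`, block `B_i` contributes its elements greater than `s`
in increasing order followed by its elements at most `s` in increasing order. -/
def miniword : List (Finset ℕ) → List ℕ
  | [] => []
  | B :: rest =>
    match miniword rest with
    | [] => B.sort (· ≤ ·)
    | s :: w =>
        ((B.filter (fun x => s < x)).sort (· ≤ ·) ++
          (B.filter (fun x => x ≤ s)).sort (· ≤ ·)) ++ s :: w

/-- `minimaj(π) = maj(miniword(π))`. -/
def minimaj (π : List (Finset ℕ)) : ℕ := majW (miniword π)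

/-- `D^{stat}_{r;β,k}(q) = Σ_{π ∈ OP_{r;β,k}} q^{stat(π)}` (the set is finite, so the
finite-support sum below is the intended polynomial). -/
noncomputable def D (r : ℕ) (β : List ℕ) (k : ℕ)
    (stat : List (Finset ℕ) → ℕ) : Polynomial ℕ :=
  ∑ᶠ π ∈ {π | IsOP r β k π}, Polynomial.X ^ stat π

/-- `D^{stat+}_{r;β,k}(q) = Σ_{π ∈ OP^all_{r;β,k}} q^{stat(π)}`. -/
noncomputable def Dall (r : ℕ) (β : List ℕ) (k : ℕ)
    (stat : List (Finset ℕ) → ℕ) : Polynomial ℕ :=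
  ∑ᶠ π ∈ {π | IsOPall r β k π}, Polynomial.X ^ stat π

/-- `D^{stat}_{r;β,α}(q)`, the shape-refined generating function. -/
noncomputable def DSh (r : ℕ) (β α : List ℕ)
    (stat : List (Finset ℕ) → ℕ) : Polynomial ℕ :=
  ∑ᶠ π ∈ {π | IsOPSh r β α π}, Polynomial.X ^ stat π

/-- `D^{stat+}_{r;β,α}(q)`, the shape-refined generating function with `0` allowed
in the last block. -/
noncomputable def DallSh (r : ℕ) (β α : List ℕ)
    (stat : List (Finset ℕ) → ℕ) : Polynomial ℕ :=
  ∑ᶠ π ∈ {π | IsOPallSh r β α π}, Polynomial.X ^ stat π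

end omp

namespace omp

/-- The domain of the insertion maps: the disjoint union over `0 ≤ ℓ ≤ k` of
`Dom_ℓ = OP_{r;β^-,ℓ} × {U ⊆ {0,…,ℓ−1} : |U| = β_n−k+ℓ} × {multisets B of size k−ℓ in {0,…,ℓ}}`
and
`Dom'_ℓ = (OP^all_{r;β^-,ℓ} ∖ OP_{r;β^-,ℓ}) × {U ⊆ {0,…,ℓ−1} : |U| = β_n−k+ℓ} ×
{multisets B of size k−ℓ−1 in {0,…,ℓ}}`
(the cardinality constraints are stated additively so that they are empty when the prescribed
size would be negative). -/
def Dom (r : ℕ) (β : List ℕ) (k : ℕ) :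
    Set (List (Finset ℕ) × Finset ℕ × Multiset ℕ) :=
  {x | ∃ ℓ ≤ k,
    ((IsOP r β.dropLast ℓ x.1 ∧ x.2.2.card + ℓ = k) ∨
      ((IsOPall r β.dropLast ℓ x.1 ∧ ¬ IsOP r β.dropLast ℓ x.1) ∧
        x.2.2.card + ℓ + 1 = k)) ∧
    x.2.1 ⊆ Finset.range ℓ ∧ x.2.1.card + k = β.getLastD 0 + ℓ ∧
    ∀ b ∈ x.2.2, b ≤ ℓ}

end omp

/-!
Let `m = n` be the largest letter. Deleting every `m` from `ρ ∈ OP_{r;β,k}`, and discarding the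
blocks `{m}` that become empty, leaves `π ∈ OP^all_{r;β^-,ℓ}`. Label every block of `π`, and every
gap between its blocks, by the number of blocks of `π` to its right; the labels of the blocks that
lost an `m` form `U`, the labels of the gaps that held a singleton `{m}` form `B`. As `m` exceeds
every other letter, the minima of the blocks of `π` do not move, no letter is in inversion with a
block `{m}`, and an `m` labelled `j` is in inversion exactly with the `j` blocks of `π` to its
right, so it adds `j` to `inv`. Since the last block of `ρ` avoids `0`, if the last block of `π`
contains `0` then `ρ` ends with a singleton `{m}` labelled `0`; forgetting this forced block gives
`Dom'_ℓ`.
-/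

namespace omp

lemma min_lt_of_forall_lt {m : ℕ} {A : Finset ℕ} (hne : A.Nonempty) (hlt : ∀ a ∈ A, a < m) :
    A.min < (m : WithTop ℕ) := by
  rw [← Finset.coe_min' hne]
  exact WithTop.coe_lt_coe.2 (hlt _ (A.min'_mem hne))

lemma inter_range_succ (U : Finset ℕ) (n : ℕ) :
    U ∩ Finset.range (n + 1) =
      if n ∈ U then insert n (U ∩ Finset.range n) else U ∩ Finset.range n := by
  rw [Finset.range_add_one]
  split_ifs with h
  exacts [Finset.inter_insert_of_mem h, Finset.inter_insert_of_notMem h]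

lemma sum_inter_range_succ {M : Type*} [AddCommMonoid M] (f : ℕ → M) (U : Finset ℕ) (n : ℕ) :
    ∑ u ∈ U ∩ Finset.range (n + 1), f u =
      ∑ u ∈ U ∩ Finset.range n, f u + if n ∈ U then f n else 0 := by
  rw [inter_range_succ]
  split_ifs
  · rw [Finset.sum_insert (by simp), add_comm]
  · rw [add_zero]

lemma card_inter_range_succ (U : Finset ℕ) (n : ℕ) :
    (U ∩ Finset.range (n + 1)).card = (U ∩ Finset.range n).card + if n ∈ U then 1 else 0 := by
  simpa only [Finset.card_eq_sum_ones] using sum_inter_range_succ (fun _ => 1) U n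

lemma filter_le_zero (B : Multiset ℕ) : B.filter (· ≤ 0) = Multiset.replicate (B.count 0) 0 := by
  simpa only [Nat.le_zero] using Multiset.filter_eq' B 0

lemma filter_le_succ (B : Multiset ℕ) (n : ℕ) :
    B.filter (· ≤ n + 1) = B.filter (· ≤ n) + Multiset.replicate (B.count (n + 1)) (n + 1) := by
  ext a
  simp only [Multiset.count_add, Multiset.count_filter, Multiset.count_replicate]
  rcases eq_or_ne a (n + 1) with rfl | ha
  · simp
  · split_ifs <;> omega

lemma getLastD_append_cons {α : Type*} (xs : List α) (y : α) (ys : List α) (d : α) :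
    (xs ++ y :: ys).getLastD d = ys.getLastD y := by
  induction xs generalizing d with
  | nil => exact List.getLastD_cons
  | cons x xs ih => rw [List.cons_append, List.getLastD_cons, ih]

lemma length_dropLast_add_one {β : List ℕ} (hβ : β ≠ []) : β.dropLast.length + 1 = β.length := by
  rw [List.length_dropLast, Nat.sub_add_cancel (List.length_pos_iff.2 hβ)]

lemma eq_and_eq_of_add_replicate_eq {α : Type*} [DecidableEq α] {M N : Multiset α} {a b : ℕ}
    {m : α} (hM : m ∉ M) (hN : m ∉ N)
    (h : M + Multiset.replicate a m = N + Multiset.replicate b m) : M = N ∧ a = b := by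
  have hab : a = b := by
    simpa [Multiset.count_eq_zero.2 hM, Multiset.count_eq_zero.2 hN] using
      congrArg (Multiset.count m) h
  exact ⟨add_right_cancel (hab ▸ h), hab⟩

def BlocksBelow (m : ℕ) (π : List (Finset ℕ)) : Prop :=
  ∀ A ∈ π, A.Nonempty ∧ ∀ a ∈ A, a < m

lemma BlocksBelow.of_cons {m : ℕ} {A : Finset ℕ} {t : List (Finset ℕ)}
    (h : BlocksBelow m (A :: t)) : BlocksBelow m t :=
  fun C hC => h C (List.mem_cons_of_mem _ hC)

lemma mem_sum_val_iff {a : ℕ} {π : List (Finset ℕ)} :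
    a ∈ (π.map Finset.val).sum ↔ ∃ A ∈ π, a ∈ A := by
  induction π with
  | nil => simp
  | cons C t ih => simp [ih]

lemma le_length_of_mem_content {r a : ℕ} {γ : List ℕ} (h : a ∈ content r γ) : a ≤ γ.length := by
  rcases Multiset.mem_add.1 h with h | h
  · rw [Multiset.eq_of_mem_replicate h]
    exact Nat.zero_le _
  · obtain ⟨i, hi, h⟩ := Multiset.mem_sum.1 h
    rw [Multiset.eq_of_mem_replicate h]
    exact Finset.mem_range.1 hi

lemma content_eq_dropLast_add (r : ℕ) {β : List ℕ} (hβ : β ≠ []) :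
    content r β = content r β.dropLast + Multiset.replicate (β.getLastD 0) β.length := by
  obtain ⟨l, x, rfl⟩ : ∃ l x, β = l ++ [x] :=
    ⟨β.dropLast, β.getLast hβ, (List.dropLast_append_getLast hβ).symm⟩
  simp only [content, List.dropLast_concat, List.getLastD_concat, List.length_append,
    List.length_singleton, Finset.sum_range_succ, List.getD_append_right _ _ _ _ le_rfl,
    Nat.sub_self, List.getD_cons_zero, add_assoc]
  congr 2
  exact Finset.sum_congr rfl fun i hi => by
    rw [List.getD_append _ _ _ _ (Finset.mem_range.1 hi)]

lemma IsOPall.blocksBelow {r ℓ : ℕ} {γ : List ℕ} {π : List (Finset ℕ)} (h : IsOPall r γ ℓ π) :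
    BlocksBelow (γ.length + 1) π := fun A hA =>
  ⟨h.2.1 A hA, fun _ ha => Nat.lt_succ_of_le
    (le_length_of_mem_content (h.2.2 ▸ mem_sum_val_iff.2 ⟨A, hA, ha⟩))⟩

def numAboveMin (C A : Finset ℕ) : ℕ :=
  (A.filter fun (a : ℕ) => C.min < (a : WithTop ℕ)).card

lemma sum_range_blk {M : Type*} [AddCommMonoid M] (f : Finset ℕ → M) (t : List (Finset ℕ)) :
    ∑ j ∈ Finset.range t.length, f (blk t j) = (t.map f).sum := by
  induction t with
  | nil => simp
  | cons C t ih => simp [Finset.sum_range_succ', blk, ← ih, add_comm]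

lemma inv_cons (A : Finset ℕ) (t : List (Finset ℕ)) :
    inv (A :: t) = (t.map (numAboveMin · A)).sum + inv t := by
  rw [← sum_range_blk]
  unfold inv
  simp only [List.length_cons, Finset.sum_range_succ' _ t.length]
  simp only [blk, numAboveMin, List.getD_cons_succ, List.getD_cons_zero, Nat.succ_lt_succ_iff,
    Nat.not_lt_zero, Nat.zero_lt_succ, if_true, if_false, add_zero]
  rw [add_comm]
  -- `inv` coerces letters to `WithBot ℕ`, definitionally the `WithTop ℕ` of `numAboveMin`
  rfl

lemma numAboveMin_singleton_left {m : ℕ} {A : Finset ℕ} (hA : ∀ a ∈ A, a ≤ m) :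
    numAboveMin {m} A = 0 := by
  simp only [numAboveMin, Finset.card_eq_zero, Finset.filter_eq_empty_iff, Finset.min_singleton]
  exact fun a ha => not_lt.2 (WithTop.coe_le_coe.2 (hA a ha))

lemma numAboveMin_insert_right {m : ℕ} {C A : Finset ℕ} (hm : m ∉ A)
    (hC : C.min < (m : WithTop ℕ)) : numAboveMin C (insert m A) = numAboveMin C A + 1 := by
  rw [numAboveMin, Finset.filter_insert, if_pos hC, Finset.card_insert_of_notMem]
  · rfl
  · exact fun h => hm (Finset.mem_of_mem_filter _ h)

lemma numAboveMin_singleton_right {m : ℕ} {C : Finset ℕ} (hC : C.min < (m : WithTop ℕ)) :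
    numAboveMin C {m} = 1 :=
  numAboveMin_insert_right (A := ∅) (Finset.notMem_empty m) hC

lemma numAboveMin_insert_left {m : ℕ} {C : Finset ℕ} (hne : C.Nonempty) (hlt : ∀ c ∈ C, c < m)
    (A : Finset ℕ) : numAboveMin (insert m C) A = numAboveMin C A := by
  have hmin : (insert m C).min = C.min := by
    rw [Finset.min_insert]
    exact min_eq_right (min_lt_of_forall_lt hne hlt).le
  simp only [numAboveMin, hmin]

lemma sum_numAboveMin_insert {m : ℕ} {t : List (Finset ℕ)} {A : Finset ℕ}
    (ht : BlocksBelow m t) (hm : m ∉ A) :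
    (t.map (numAboveMin · (insert m A))).sum = (t.map (numAboveMin · A)).sum + t.length := by
  induction t with
  | nil => simp
  | cons C t ih =>
    obtain ⟨hne, hlt⟩ := ht C List.mem_cons_self
    simp only [List.map_cons, List.sum_cons, List.length_cons,
      numAboveMin_insert_right hm (min_lt_of_forall_lt hne hlt), ih ht.of_cons]
    ring

lemma sum_numAboveMin_singleton {m : ℕ} {t : List (Finset ℕ)} (ht : BlocksBelow m t) :
    (t.map (numAboveMin · {m})).sum = t.length := by
  simpa [numAboveMin] using sum_numAboveMin_insert (A := ∅) ht (Finset.notMem_empty m)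

lemma inv_replicate_append (m c : ℕ) (w : List (Finset ℕ)) :
    inv (List.replicate c {m} ++ w) = c * (w.map (numAboveMin · {m})).sum + inv w := by
  induction c with
  | zero => simp
  | succ c ih =>
    rw [List.replicate_succ, List.cons_append, inv_cons, ih, List.map_append, List.sum_append,
      List.map_replicate, List.sum_replicate, numAboveMin_singleton_left (by simp)]
    ring

/-- Blocks and gaps of `π` are labelled by the number of blocks of `π` to their right: `m` joins
the blocks labelled by `U`, and `B.count j` singletons `{m}` go into the gap labelled `j`. -/
def insertLetter (m : ℕ) : List (Finset ℕ) → Finset ℕ → Multiset ℕ → List (Finset ℕ)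
  | [], _, B => List.replicate (B.count 0) {m}
  | A :: t, U, B => List.replicate (B.count (t.length + 1)) {m} ++
      (if t.length ∈ U then insert m A else A) :: insertLetter m t U B

section Insertion

variable {m : ℕ} {U : Finset ℕ} {B : Multiset ℕ}

lemma insertLetter_nil : insertLetter m [] U B = List.replicate (B.count 0) {m} := rfl

lemma insertLetter_cons (A : Finset ℕ) (t : List (Finset ℕ)) :
    insertLetter m (A :: t) U B = List.replicate (B.count (t.length + 1)) {m} ++
      (if t.length ∈ U then insert m A else A) :: insertLetter m t U B := rfl

lemma sum_numAboveMin_insertLetter {t : List (Finset ℕ)} {A : Finset ℕ} (ht : BlocksBelow m t)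
    (hA : ∀ a ∈ A, a ≤ m) :
    ((insertLetter m t U B).map (numAboveMin · A)).sum = (t.map (numAboveMin · A)).sum := by
  induction t with
  | nil => simp [insertLetter_nil, numAboveMin_singleton_left hA]
  | cons C t ih =>
    obtain ⟨hne, hlt⟩ := ht C List.mem_cons_self
    have hC : numAboveMin (if t.length ∈ U then insert m C else C) A = numAboveMin C A := by
      split_ifs
      exacts [numAboveMin_insert_left hne hlt A, rfl]
    simp only [insertLetter_cons, List.map_append, List.sum_append, List.map_replicate,
      List.sum_replicate, List.map_cons, List.sum_cons, numAboveMin_singleton_left hA, smul_zero,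
      zero_add, hC, ih ht.of_cons]

lemma inv_insertLetter {π : List (Finset ℕ)} (hπ : BlocksBelow m π) :
    inv (insertLetter m π U B) =
      inv π + ∑ u ∈ U ∩ Finset.range π.length, u + (B.filter (· ≤ π.length)).sum := by
  induction π with
  | nil =>
    rw [insertLetter_nil, ← List.append_nil (List.replicate _ _), inv_replicate_append,
      List.length_nil, filter_le_zero]
    simp
  | cons A t ih =>
    obtain ⟨hne, hlt⟩ := hπ A List.mem_cons_self
    have ht := hπ.of_cons
    set A' := if t.length ∈ U then insert m A else A with hA'
    have hmin : numAboveMin A' = numAboveMin A := by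
      rw [hA']
      split_ifs
      exacts [funext (numAboveMin_insert_left hne hlt), rfl]
    have hle : ∀ a ∈ A', a ≤ m := by
      rw [hA']
      split_ifs <;> simp +contextual [or_imp, fun a ha => (hlt a ha).le]
    have hsum : (t.map (numAboveMin · A')).sum =
        (t.map (numAboveMin · A)).sum + if t.length ∈ U then t.length else 0 := by
      rw [hA']
      split_ifs
      exacts [sum_numAboveMin_insert ht fun h => (hlt m h).false, rfl]
    rw [insertLetter_cons, inv_replicate_append, List.map_cons, List.sum_cons, hmin,
      numAboveMin_singleton_right (min_lt_of_forall_lt hne hlt),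
      sum_numAboveMin_insertLetter ht (by simp), sum_numAboveMin_singleton ht, inv_cons,
      sum_numAboveMin_insertLetter ht hle, hsum, ih ht, inv_cons, List.length_cons,
      sum_inter_range_succ, filter_le_succ, Multiset.sum_add, Multiset.sum_replicate, smul_eq_mul]
    ring

lemma length_insertLetter (π : List (Finset ℕ)) :
    (insertLetter m π U B).length = π.length + (B.filter (· ≤ π.length)).card := by
  induction π with
  | nil => simp only [insertLetter_nil, filter_le_zero, List.length_replicate, List.length_nil,
      Multiset.card_replicate, zero_add]
  | cons A t ih =>
    simp only [insertLetter_cons, List.length_append, List.length_replicate, List.length_cons, ih,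
      filter_le_succ, Multiset.card_add, Multiset.card_replicate]
    ring

lemma nonempty_of_mem_insertLetter {π : List (Finset ℕ)} (hπ : ∀ A ∈ π, A.Nonempty) :
    ∀ C ∈ insertLetter m π U B, C.Nonempty := by
  induction π with
  | nil => simp [insertLetter_nil]
  | cons A t ih =>
    have hA := hπ A List.mem_cons_self
    simp only [insertLetter_cons, List.mem_append, List.mem_replicate, List.mem_cons]
    rintro C ((⟨-, rfl⟩) | rfl | hC)
    · exact Finset.singleton_nonempty m
    · split_ifs
      exacts [Finset.insert_nonempty m A, hA]
    · exact ih (fun D hD => hπ D (List.mem_cons_of_mem _ hD)) C hC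

lemma sum_val_replicate_singleton (c : ℕ) :
    ((List.replicate c ({m} : Finset ℕ)).map Finset.val).sum = Multiset.replicate c m := by
  induction c with
  | zero => rfl
  | succ c ih => rw [List.replicate_succ, List.map_cons, List.sum_cons, ih,
      Multiset.replicate_succ, Finset.singleton_val, Multiset.singleton_add]

lemma sum_val_insertLetter {π : List (Finset ℕ)} (hm : ∀ A ∈ π, m ∉ A) :
    ((insertLetter m π U B).map Finset.val).sum = (π.map Finset.val).sum +
      Multiset.replicate ((U ∩ Finset.range π.length).card + (B.filter (· ≤ π.length)).card) m := by
  induction π with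
  | nil => simp only [insertLetter_nil, sum_val_replicate_singleton, filter_le_zero,
      List.length_nil, Multiset.card_replicate, Finset.range_zero, Finset.inter_empty,
      Finset.card_empty, zero_add, List.map_nil, List.sum_nil]
  | cons A t ih =>
    have hmA := hm A List.mem_cons_self
    have hval : (if t.length ∈ U then insert m A else A).val =
        A.val + Multiset.replicate (if t.length ∈ U then 1 else 0) m := by
      split_ifs
      · rw [Finset.insert_val_of_notMem hmA, Multiset.replicate_one, add_comm,
          Multiset.singleton_add]
      · rw [Multiset.replicate_zero, add_zero]
    rw [insertLetter_cons, List.map_append, List.sum_append, List.map_cons, List.sum_cons,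
      sum_val_replicate_singleton, ih fun C hC => hm C (List.mem_cons_of_mem _ hC), hval,
      List.map_cons, List.sum_cons, List.length_cons, card_inter_range_succ, filter_le_succ,
      Multiset.card_add, Multiset.card_replicate]
    ext a
    simp only [Multiset.count_add, Multiset.count_replicate]
    split_ifs <;> omega

lemma zero_mem_getLastD_insertLetter (hm : m ≠ 0) {π : List (Finset ℕ)} {d d' : Finset ℕ}
    (hd : 0 ∈ d ↔ 0 ∈ d') :
    0 ∈ (insertLetter m π U B).getLastD d ↔ B.count 0 = 0 ∧ 0 ∈ π.getLastD d' := by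
  induction π generalizing d d' with
  | nil =>
    rcases Nat.eq_zero_or_pos (B.count 0) with h | h
    · simp [insertLetter_nil, h, hd]
    · simp [insertLetter_nil, List.getLast?_replicate, h.ne', hm.symm]
  | cons A t ih =>
    have hA : 0 ∈ (if t.length ∈ U then insert m A else A) ↔ 0 ∈ A := by
      split_ifs <;> simp [hm.symm]
    rw [insertLetter_cons, getLastD_append_cons, List.getLastD_cons, ih hA]

lemma insertLetter_congr {π : List (Finset ℕ)} {U₁ U₂ : Finset ℕ} {B₁ B₂ : Multiset ℕ}
    (hU : ∀ j < π.length, j ∈ U₁ ↔ j ∈ U₂) (hB : ∀ j ≤ π.length, B₁.count j = B₂.count j) :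
    insertLetter m π U₁ B₁ = insertLetter m π U₂ B₂ := by
  induction π with
  | nil => rw [insertLetter_nil, insertLetter_nil, hB 0 le_rfl]
  | cons A t ih =>
    simp only [List.length_cons] at hU hB
    rw [insertLetter_cons, insertLetter_cons, hB _ le_rfl,
      ih (fun j hj => hU j (by omega)) (fun j hj => hB j (by omega)),
      if_congr (hU _ (by omega)) rfl rfl]

lemma insertLetter_add_singleton_length (π : List (Finset ℕ)) :
    insertLetter m π U (B + {π.length}) = {m} :: insertLetter m π U B := by
  cases π with
  | nil => simp [insertLetter_nil, List.replicate_succ]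
  | cons A t =>
    have : insertLetter m t U (B + {t.length + 1}) = insertLetter m t U B :=
      insertLetter_congr (fun _ _ => Iff.rfl) fun j hj => by simp [Multiset.count_singleton]; omega
    simp [insertLetter_cons, List.replicate_succ, this]

end Insertion

def removeLetter (m : ℕ) : List (Finset ℕ) → List (Finset ℕ) × Finset ℕ × Multiset ℕ
  | [] => ([], ∅, 0)
  | C :: w =>
    let p := removeLetter m w
    if C = {m} then (p.1, p.2.1, p.2.2 + {p.1.length})
    else (C.erase m :: p.1, if m ∈ C then insert p.1.length p.2.1 else p.2.1, p.2.2)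

section Deletion

variable {m : ℕ}

lemma removeLetter_cons {C : Finset ℕ} {w π : List (Finset ℕ)} {U : Finset ℕ} {B : Multiset ℕ}
    (h : removeLetter m w = (π, U, B)) :
    removeLetter m (C :: w) = if C = {m} then (π, U, B + {π.length})
      else (C.erase m :: π, if m ∈ C then insert π.length U else U, B) := by
  simp only [removeLetter, h]

lemma removeLetter_snd_subset_range (ρ : List (Finset ℕ)) :
    (removeLetter m ρ).2.1 ⊆ Finset.range (removeLetter m ρ).1.length := by
  induction ρ with
  | nil => exact Finset.empty_subset _
  | cons C w ih =>
    rcases h : removeLetter m w with ⟨π, U, B⟩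
    rw [h] at ih
    rw [removeLetter_cons h]
    split_ifs
    · exact ih
    · exact Finset.insert_subset (by simp) (ih.trans (by simp))
    · exact ih.trans (by simp)

lemma le_length_of_mem_removeLetter {ρ : List (Finset ℕ)} {b : ℕ}
    (hb : b ∈ (removeLetter m ρ).2.2) : b ≤ (removeLetter m ρ).1.length := by
  induction ρ with
  | nil => simp [removeLetter] at hb
  | cons C w ih =>
    rcases h : removeLetter m w with ⟨π, U, B⟩
    rw [h] at ih
    rw [removeLetter_cons h] at hb ⊢
    split_ifs at hb ⊢
    · rcases Multiset.mem_add.1 hb with hb | hb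
      exacts [ih hb, (Multiset.mem_singleton.1 hb).le]
    · exact (ih hb).trans (Nat.le_succ _)
    · exact (ih hb).trans (Nat.le_succ _)

lemma length_removeLetter (ρ : List (Finset ℕ)) :
    ρ.length = (removeLetter m ρ).1.length + Multiset.card (removeLetter m ρ).2.2 := by
  induction ρ with
  | nil => rfl
  | cons C w ih =>
    rcases h : removeLetter m w with ⟨π, U, B⟩
    rw [h] at ih
    rw [removeLetter_cons h]
    split_ifs <;> simp only [ih, List.length_cons, Multiset.card_add, Multiset.card_singleton] <;>
      ring

lemma removeLetter_replicate_append (c : ℕ) {l π : List (Finset ℕ)} {U : Finset ℕ}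
    {B : Multiset ℕ} (h : removeLetter m l = (π, U, B)) :
    removeLetter m (List.replicate c {m} ++ l) = (π, U, B + Multiset.replicate c π.length) := by
  induction c with
  | zero => simpa using h
  | succ c ih =>
    rw [List.replicate_succ, List.cons_append, removeLetter_cons ih, if_pos rfl, add_assoc,
      Multiset.replicate_succ, ← Multiset.singleton_add, add_comm {_}]

lemma removeLetter_insertLetter {π : List (Finset ℕ)} {U : Finset ℕ} {B : Multiset ℕ}
    (hπ : BlocksBelow m π) :
    removeLetter m (insertLetter m π U B) =
      (π, U ∩ Finset.range π.length, B.filter (· ≤ π.length)) := by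
  induction π with
  | nil =>
    rw [insertLetter_nil, ← List.append_nil (List.replicate _ _),
      removeLetter_replicate_append _ (show removeLetter m [] = ([], ∅, 0) from rfl),
      List.length_nil, filter_le_zero]
    simp
  | cons A t ih =>
    obtain ⟨⟨a, ha⟩, hlt⟩ := hπ A List.mem_cons_self
    have hmA : m ∉ A := fun h => (hlt m h).false
    have hA' : (if t.length ∈ U then insert m A else A) ≠ {m} := by
      intro h
      have haA' : a ∈ (if t.length ∈ U then insert m A else A) := by split_ifs <;> simp [ha]
      rw [h, Finset.mem_singleton] at haA'
      exact (hlt a ha).ne haA'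
    have hcons : removeLetter m ((if t.length ∈ U then insert m A else A) :: insertLetter m t U B) =
        (A :: t, U ∩ Finset.range (t.length + 1), B.filter (· ≤ t.length)) := by
      rw [removeLetter_cons (ih hπ.of_cons), if_neg hA', inter_range_succ]
      by_cases hU : t.length ∈ U <;> simp [hU, hmA]
    rw [insertLetter_cons, removeLetter_replicate_append _ hcons, List.length_cons, filter_le_succ]

lemma insertLetter_removeLetter {ρ : List (Finset ℕ)} (hρ : BlocksBelow (m + 1) ρ) :
    insertLetter m (removeLetter m ρ).1 (removeLetter m ρ).2.1 (removeLetter m ρ).2.2 = ρ := by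
  induction ρ with
  | nil => rfl
  | cons C w ih =>
    have hbound : ∀ b ∈ (removeLetter m w).2.2, b ≤ (removeLetter m w).1.length :=
      fun _ => le_length_of_mem_removeLetter
    have hsub := removeLetter_snd_subset_range (m := m) w
    rcases h : removeLetter m w with ⟨π, U, B⟩
    rw [h] at ih hbound hsub
    dsimp only at ih hbound hsub
    have hw : insertLetter m π U B = w := ih hρ.of_cons
    rw [removeLetter_cons h]
    by_cases hC : C = {m}
    · rw [if_pos hC, insertLetter_add_singleton_length, hw, hC]
    have hcount : B.count (π.length + 1) = 0 :=
      Multiset.count_eq_zero.2 fun hb => by have := hbound _ hb; omega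
    rw [if_neg hC, insertLetter_cons, hcount, List.replicate_zero, List.nil_append]
    by_cases hmC : m ∈ C
    · have hU : insertLetter m π (insert π.length U) B = insertLetter m π U B :=
        insertLetter_congr (fun j hj => by simp [hj.ne]) fun _ _ => rfl
      rw [if_pos hmC, if_pos (Finset.mem_insert_self _ _), Finset.insert_erase hmC, hU, hw]
    · have hπU : π.length ∉ U := fun hU => (Finset.mem_range.1 (hsub hU)).false
      rw [if_neg hmC, if_neg hπU, Finset.erase_eq_of_notMem hmC, hw]

lemma blocksBelow_removeLetter {ρ : List (Finset ℕ)} (hρ : BlocksBelow (m + 1) ρ) :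
    BlocksBelow m (removeLetter m ρ).1 := by
  induction ρ with
  | nil => simp [removeLetter, BlocksBelow]
  | cons C w ih =>
    obtain ⟨hne, hle⟩ := hρ C List.mem_cons_self
    have hw := ih hρ.of_cons
    rcases h : removeLetter m w with ⟨π, U, B⟩
    rw [h] at hw
    rw [removeLetter_cons h]
    by_cases hC : C = {m}
    · rwa [if_pos hC]
    · rw [if_neg hC]
      refine List.forall_mem_cons.2 ⟨⟨?_, fun a ha => ?_⟩, hw⟩
      · exact Finset.nonempty_iff_ne_empty.2 fun h =>
          ((Finset.erase_eq_empty_iff _ _).1 h).elim hne.ne_empty hC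
      · exact lt_of_le_of_ne (Nat.lt_succ_iff.1 (hle a (Finset.mem_of_mem_erase ha)))
          (Finset.ne_of_mem_erase ha)

lemma sum_val_removeLetter {ρ : List (Finset ℕ)} (hρ : BlocksBelow (m + 1) ρ) :
    (ρ.map Finset.val).sum = ((removeLetter m ρ).1.map Finset.val).sum + Multiset.replicate
      ((removeLetter m ρ).2.1.card + Multiset.card (removeLetter m ρ).2.2) m := by
  conv_lhs => rw [← insertLetter_removeLetter hρ]
  rw [sum_val_insertLetter fun A hA hm => ((blocksBelow_removeLetter hρ A hA).2 m hm).false,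
    Finset.inter_eq_left.2 (removeLetter_snd_subset_range ρ),
    Multiset.filter_eq_self.2 fun b hb => le_length_of_mem_removeLetter hb]

end Deletion

/-- The forced singleton `{m}` at the end of the partition (label `0`), present exactly when the
last block of `π` contains `0`: it accounts for `Dom'_ℓ`. -/
def zeroPad (π : List (Finset ℕ)) : Multiset ℕ := if 0 ∈ π.getLastD ∅ then {0} else 0

lemma mem_Dom_iff {r k : ℕ} {β : List ℕ} {x : List (Finset ℕ) × Finset ℕ × Multiset ℕ} :
    x ∈ Dom r β k ↔ IsOPall r β.dropLast x.1.length x.1 ∧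
      Multiset.card (x.2.2 + zeroPad x.1) + x.1.length = k ∧
      x.2.1 ⊆ Finset.range x.1.length ∧ x.2.1.card + k = β.getLastD 0 + x.1.length ∧
      ∀ b ∈ x.2.2, b ≤ x.1.length := by
  constructor
  · rintro ⟨ℓ, -, hcase, hU, hcard, hB⟩
    have hall : IsOPall r β.dropLast ℓ x.1 := hcase.elim (·.1.1) (·.1.1)
    obtain rfl : x.1.length = ℓ := hall.1
    refine ⟨hall, ?_, hU, hcard, hB⟩
    rcases hcase with ⟨hop, hc⟩ | ⟨⟨-, hnop⟩, hc⟩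
    · simpa only [zeroPad, if_neg hop.2, add_zero] using hc
    · have h0 : 0 ∈ x.1.getLastD ∅ := not_not.1 fun h0 => hnop ⟨hall, h0⟩
      simp only [zeroPad, if_pos h0, Multiset.card_add, Multiset.card_singleton]
      omega
  · rintro ⟨hall, hcard, hU, hUcard, hB⟩
    refine ⟨x.1.length, by omega, ?_, hU, hUcard, hB⟩
    by_cases h0 : 0 ∈ x.1.getLastD ∅
    · simp only [zeroPad, if_pos h0, Multiset.card_add, Multiset.card_singleton] at hcard
      exact Or.inr ⟨⟨hall, fun hop => hop.2 h0⟩, by omega⟩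
    · simp only [zeroPad, if_neg h0, add_zero] at hcard
      exact Or.inl ⟨⟨hall, h0⟩, hcard⟩

lemma filter_add_zeroPad {π : List (Finset ℕ)} {B : Multiset ℕ} (hB : ∀ b ∈ B, b ≤ π.length) :
    (B + zeroPad π).filter (· ≤ π.length) = B + zeroPad π := by
  refine Multiset.filter_eq_self.2 fun b hb => ?_
  rcases Multiset.mem_add.1 hb with hb | hb
  · exact hB b hb
  · unfold zeroPad at hb
    split_ifs at hb
    · rw [Multiset.mem_singleton.1 hb]
      exact Nat.zero_le _
    · exact absurd hb (Multiset.notMem_zero b)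

def insertionMap (m : ℕ) (x : List (Finset ℕ) × Finset ℕ × Multiset ℕ) : List (Finset ℕ) :=
  insertLetter m x.1 x.2.1 (x.2.2 + zeroPad x.1)

def deletionMap (m : ℕ) (ρ : List (Finset ℕ)) : List (Finset ℕ) × Finset ℕ × Multiset ℕ :=
  let p := removeLetter m ρ
  (p.1, p.2.1, p.2.2 - zeroPad p.1)

section Bijection

variable {r k : ℕ} {β : List ℕ}

lemma inv_insertionMap (hβ : β ≠ []) {x : List (Finset ℕ) × Finset ℕ × Multiset ℕ}
    (hx : x ∈ Dom r β k) :
    inv (insertionMap β.length x) = inv x.1 + ∑ u ∈ x.2.1, u + x.2.2.sum := by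
  obtain ⟨hall, -, hU, -, hB⟩ := mem_Dom_iff.1 hx
  have hzero : (zeroPad x.1).sum = 0 := by unfold zeroPad; split_ifs <;> rfl
  rw [insertionMap, inv_insertLetter (length_dropLast_add_one hβ ▸ hall.blocksBelow),
    Finset.inter_eq_left.2 hU, filter_add_zeroPad hB, Multiset.sum_add, hzero, add_zero]

lemma leftInvOn_deletionMap (hβ : β ≠ []) :
    Set.LeftInvOn (deletionMap β.length) (insertionMap β.length) (Dom r β k) := by
  intro x hx
  obtain ⟨hall, -, hU, -, hB⟩ := mem_Dom_iff.1 hx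
  rw [insertionMap, deletionMap,
    removeLetter_insertLetter (length_dropLast_add_one hβ ▸ hall.blocksBelow),
    Finset.inter_eq_left.2 hU, filter_add_zeroPad hB]
  simp

lemma mapsTo_insertionMap (hβ : β ≠ []) :
    Set.MapsTo (insertionMap β.length) (Dom r β k) {ρ | IsOP r β k ρ} := by
  intro x hx
  obtain ⟨hall, hcard, hU, hUcard, hB⟩ := mem_Dom_iff.1 hx
  have hπ : BlocksBelow β.length x.1 := length_dropLast_add_one hβ ▸ hall.blocksBelow
  have hm0 : β.length ≠ 0 := by simpa using hβ
  refine ⟨⟨?_, nonempty_of_mem_insertLetter hall.2.1, ?_⟩, fun h0 => ?_⟩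
  · rw [insertionMap, length_insertLetter, filter_add_zeroPad hB]
    omega
  · rw [insertionMap, sum_val_insertLetter fun A hA hm => ((hπ A hA).2 _ hm).false,
      Finset.inter_eq_left.2 hU, filter_add_zeroPad hB, hall.2.2, content_eq_dropLast_add r hβ]
    congr 2
    omega
  · obtain ⟨hcount, hlast⟩ := (zero_mem_getLastD_insertLetter hm0 Iff.rfl).1 h0
    rw [zeroPad, if_pos hlast, Multiset.count_add, Multiset.count_singleton_self] at hcount
    omega

lemma zeroPad_le_removeLetter {m : ℕ} (hm : m ≠ 0) {ρ : List (Finset ℕ)}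
    (hρ : BlocksBelow (m + 1) ρ) (hlast : 0 ∉ ρ.getLastD ∅) :
    zeroPad (removeLetter m ρ).1 ≤ (removeLetter m ρ).2.2 := by
  unfold zeroPad
  split_ifs with h0
  · refine Multiset.singleton_le.2 (Multiset.count_ne_zero.1 fun hcount => hlast ?_)
    rw [← insertLetter_removeLetter hρ]
    exact (zero_mem_getLastD_insertLetter hm Iff.rfl).2 ⟨hcount, h0⟩
  · exact Multiset.zero_le _

lemma rightInvOn_deletionMap (hβ : β ≠ []) :
    Set.RightInvOn (deletionMap β.length) (insertionMap β.length) {ρ | IsOP r β k ρ} := by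
  intro ρ hρ
  have hgood : BlocksBelow (β.length + 1) ρ := hρ.1.blocksBelow
  rw [insertionMap, deletionMap]
  dsimp only
  rw [tsub_add_cancel_of_le (zeroPad_le_removeLetter (by simpa using hβ) hgood hρ.2),
    insertLetter_removeLetter hgood]

lemma mapsTo_deletionMap (hβ : β ≠ []) :
    Set.MapsTo (deletionMap β.length) {ρ | IsOP r β k ρ} (Dom r β k) := by
  intro ρ hρ
  have hgood : BlocksBelow (β.length + 1) ρ := hρ.1.blocksBelow
  have hπ := blocksBelow_removeLetter hgood
  have hle := zeroPad_le_removeLetter (by simpa using hβ) hgood hρ.2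
  obtain ⟨hcontent, hcount⟩ := eq_and_eq_of_add_replicate_eq
    (mem_sum_val_iff.not.2 fun ⟨A, hA, hm⟩ => ((hπ A hA).2 _ hm).false)
    (fun hm => by
      have := le_length_of_mem_content hm
      have := length_dropLast_add_one hβ
      omega)
    ((sum_val_removeLetter hgood).symm.trans (hρ.1.2.2.trans (content_eq_dropLast_add r hβ)))
  have hlen := hρ.1.1 ▸ length_removeLetter (m := β.length) ρ
  rw [mem_Dom_iff]
  dsimp only [deletionMap]
  rw [tsub_add_cancel_of_le hle]
  exact ⟨⟨rfl, fun A hA => (hπ A hA).1, hcontent⟩, by omega, removeLetter_snd_subset_range ρ,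
    by omega, fun b hb => le_length_of_mem_removeLetter (Multiset.mem_of_le tsub_le_self hb)⟩

end Bijection

end omp

theorem insertion_bijection_inv_general (r k : ℕ) (β : List ℕ) (hβ : β ≠ []) :
    ∃ Φ : List (Finset ℕ) × Finset ℕ × Multiset ℕ → List (Finset ℕ),
      Set.BijOn Φ (omp.Dom r β k) {π | omp.IsOP r β k π} ∧
      ∀ x ∈ omp.Dom r β k,
        omp.inv (Φ x) = omp.inv x.1 + (∑ u ∈ x.2.1, u) + x.2.2.sum :=
  ⟨omp.insertionMap β.length,
    Set.InvOn.bijOn ⟨omp.leftInvOn_deletionMap hβ, omp.rightInvOn_deletionMap hβ⟩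
      (omp.mapsTo_insertionMap hβ) (omp.mapsTo_deletionMap hβ),
    fun _ hx => omp.inv_insertionMap hβ hx⟩

/-- The insertion bijection for `inv`: there is a bijection `Φ` from the
disjoint union over `0 ≤ ℓ ≤ k` of `Dom_ℓ ⊔ Dom'_ℓ` onto `OP_{r;β,k}` with
`inv(Φ(π,U,B)) = inv(π) + Σ_{u∈U} u + Σ_{b∈B} b`. -/
theorem insertion_bijection_inv (r k : ℕ) (hk : 1 ≤ k) (β : List ℕ) (hβ : β ≠ []) :
    ∃ Φ : List (Finset ℕ) × Finset ℕ × Multiset ℕ → List (Finset ℕ),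
      Set.BijOn Φ (omp.Dom r β k) {π | omp.IsOP r β k π} ∧
      ∀ x ∈ omp.Dom r β k,
        omp.inv (Φ x) = omp.inv x.1 + (∑ u ∈ x.2.1, u) + x.2.2.sum :=
  insertion_bijection_inv_general r k β hβ
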